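/- arXiv:1303.4443 — 4 statements merged into one kernel-verified Lean document; each statement's English description precedes it below -/
import Mathlib

section
/- Let G = (V, E) be a digraph on n vertices and let ω = (v_1, ..., v_n) be a linear ordering of G with directed vertex separation number at most d, i.e., for every i with 1 ≤ i ≤ n there are at most d vertices v_j with j ≥ i for which there exists an edge (v_j, v_k) ∈ E with k < i. Then ω is a (2d+1)-topological ordering of G: for every directed simple path p of G and every i with 1 ≤ i ≤ n, at most 2d+1 edges of p lie in the cut of ω at position i. -/
/-- `InCut f i u u'` : the pair `(u, u')` crosses the cut at position `i` of the
ordering whose position function is `f`. -/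
def InCut {α : Type*} (f : α → ℕ) (i : ℕ) (u u' : α) : Prop :=
  (f u < i ∧ i ≤ f u') ∨ (f u' < i ∧ i ≤ f u)

/-- `IsDiPath E p m` : `p 0, p 1, ..., p m` is a directed simple path in the
digraph with edge set `E`. -/
def IsDiPath {α : Type*} (E : Set (α × α)) (p : ℕ → α) (m : ℕ) : Prop :=
  (∀ j k, j ≤ m → k ≤ m → p j = p k → j = k) ∧ ∀ j, j < m → (p j, p (j + 1)) ∈ E

/-- `ω` is a `z`-topological ordering of the digraph on `Fin n` with edge set `E`. -/
def IsZTopOrdering {n : ℕ} (E : Set (Fin n × Fin n)) (ω : Fin n ≃ Fin n) (z : ℕ) : Prop :=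
  ∀ (p : ℕ → Fin n) (m : ℕ), IsDiPath E p m →
    ∀ i : ℕ,
      Nat.card {j : ℕ // j < m ∧ InCut (fun v => (ω v : ℕ)) i (p j) (p (j + 1))} ≤ z

/-- If the linear ordering `ω` has directed vertex separation number at most `d`,
then `ω` is a `(2d+1)`-topological ordering. -/
theorem dvsn_le_implies_two_d_plus_one_topological {n : ℕ} (E : Set (Fin n × Fin n))
    (ω : Fin n ≃ Fin n) (d : ℕ)
    (hdvsn : ∀ i : ℕ,
      Nat.card {v : Fin n // i ≤ (ω v : ℕ) ∧ ∃ u, (v, u) ∈ E ∧ (ω u : ℕ) < i} ≤ d) :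
    IsZTopOrdering E ω (2 * d + 1) := by
  classical
  intro p m hp i
  obtain ⟨hinj, hedge⟩ := hp
  set f : Fin n → ℕ := fun v => (ω v : ℕ) with hf
  set Fb : Finset ℕ := (Finset.range m).filter (fun j => i ≤ f (p j) ∧ f (p (j+1)) < i)
    with hFb
  set Ff : Finset ℕ := (Finset.range m).filter (fun j => f (p j) < i ∧ i ≤ f (p (j+1)))
    with hFf
  -- the set of crossing path indices is Ff ∪ Fb
  have hset : {j : ℕ | j < m ∧ InCut f i (p j) (p (j+1))} = ↑(Ff ∪ Fb) := by
    ext j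
    simp only [Set.mem_setOf_eq, Finset.coe_union, Set.mem_union, Finset.coe_filter,
      Finset.mem_range, Set.mem_setOf_eq, InCut, hFf, hFb]
    tauto
  have h1 : Nat.card {j : ℕ // j < m ∧ InCut f i (p j) (p (j+1))} = (Ff ∪ Fb).card := by
    have : Nat.card {j : ℕ | j < m ∧ InCut f i (p j) (p (j+1))}
        = ((Ff ∪ Fb : Finset ℕ) : Set ℕ).ncard := by
      rw [hset, Nat.card_coe_set_eq]
    rw [Set.ncard_coe_finset] at this
    exact this
  -- backward edges bounded by d
  have hB : Fb.card ≤ d := by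
    have hd := hdvsn i
    set T : Set (Fin n) := {v | i ≤ f v ∧ ∃ u, (v, u) ∈ E ∧ f u < i} with hT
    have hdT : T.ncard ≤ d := by
      rw [← Nat.card_coe_set_eq]; exact hd
    have hmap : ∀ j ∈ Fb, p j ∈ T := by
      intro j hj
      rw [hFb, Finset.mem_filter, Finset.mem_range] at hj
      exact ⟨hj.2.1, p (j+1), hedge j hj.1, hj.2.2⟩
    have hinj' : Set.InjOn p ↑Fb := by
      intro a ha b hb hab
      rw [Finset.mem_coe, hFb, Finset.mem_filter, Finset.mem_range] at ha hb
      exact hinj a b (le_of_lt ha.1) (le_of_lt hb.1) hab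
    calc Fb.card = (↑Fb : Set ℕ).ncard := (Set.ncard_coe_finset _).symm
      _ = (p '' ↑Fb).ncard := (Set.ncard_image_of_injOn hinj').symm
      _ ≤ T.ncard := Set.ncard_le_ncard (by
            rintro v ⟨j, hj, rfl⟩; exact hmap j hj) T.toFinite
      _ ≤ d := hdT
  -- descent lemma: between a position on the right and a later one on the left,
  -- there is a backward crossing
  have descent : ∀ a c : ℕ, a ≤ c → i ≤ f (p a) → f (p c) < i →
      ∃ b, a ≤ b ∧ b < c ∧ i ≤ f (p b) ∧ f (p (b+1)) < i := by
    intro a c hac ha hc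
    set T : Finset ℕ := (Finset.Icc a c).filter (fun x => i ≤ f (p x)) with hTd
    have hTne : T.Nonempty := ⟨a, by simp [hTd, hac, ha]⟩
    set b := T.max' hTne with hb
    have hbT : b ∈ T := T.max'_mem hTne
    rw [hTd, Finset.mem_filter, Finset.mem_Icc] at hbT
    have hbc : b < c := by
      rcases lt_or_eq_of_le hbT.1.2 with h | h
      · exact h
      · exfalso; rw [h] at hbT; omega
    have hb1 : f (p (b+1)) < i := by
      by_contra h
      push_neg at h
      have hmem : b + 1 ∈ T := by
        rw [hTd, Finset.mem_filter, Finset.mem_Icc]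
        exact ⟨⟨le_trans hbT.1.1 (Nat.le_succ b), hbc⟩, h⟩
      have := T.le_max' _ hmem
      omega
    exact ⟨b, hbT.1.1, hbc, hbT.2, hb1⟩
  -- forward edges bounded by backward edges + 1
  have hF : Ff.card ≤ Fb.card + 1 := by
    set h : ℕ → ℕ := fun j => (Fb.filter (fun x => x < j)).card with hh
    have hmono : ∀ a ∈ Ff, ∀ b ∈ Ff, a < b → h a < h b := by
      intro a ha b hb hab
      rw [hFf, Finset.mem_filter, Finset.mem_range] at ha hb
      obtain ⟨c, hc1, hc2, hc3, hc4⟩ := descent (a+1) b hab ha.2.2 hb.2.1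
      have hcFb : c ∈ Fb := by
        rw [hFb, Finset.mem_filter, Finset.mem_range]
        exact ⟨lt_trans hc2 hb.1, hc3, hc4⟩
      apply Finset.card_lt_card
      constructor
      · intro x hx
        rw [Finset.mem_filter] at hx ⊢
        exact ⟨hx.1, lt_trans hx.2 hab⟩
      · intro hsub
        have hcmem : c ∈ Fb.filter (fun x => x < b) := by
          rw [Finset.mem_filter]; exact ⟨hcFb, hc2⟩
        have := hsub hcmem
        rw [Finset.mem_filter] at this
        omega
    have hbound : ∀ a ∈ Ff, h a ∈ Finset.range (Fb.card + 1) := by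
      intro a _
      rw [Finset.mem_range]
      exact Nat.lt_succ_of_le (Finset.card_filter_le _ _)
    have hinjh : Set.InjOn h ↑Ff := by
      intro a ha b hb hab
      rcases lt_trichotomy a b with h' | h' | h'
      · exact absurd hab (Nat.ne_of_lt (hmono a ha b hb h'))
      · exact h'
      · exact absurd hab.symm (Nat.ne_of_lt (hmono b hb a ha h'))
    calc Ff.card ≤ (Finset.range (Fb.card + 1)).card :=
          Finset.card_le_card_of_injOn h hbound hinjh
      _ = Fb.card + 1 := Finset.card_range _
  rw [h1]
  calc (Ff ∪ Fb).card ≤ Ff.card + Fb.card := Finset.card_union_le _ _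
    _ ≤ (Fb.card + 1) + Fb.card := by omega
    _ ≤ 2 * d + 1 := by omega
end

section
/- Let G = (V, E) be a digraph that admits a directed path decomposition of width at most d. Then G has zig-zag number at most 2d+1, i.e., there exists a linear ordering ω of V that is a (2d+1)-topological ordering of G. -/
/-- Discrete intermediate value: if `P a` holds and `P b` fails with `a < b`,
there is a `k ∈ [a, b)` where `P` switches off. -/
lemma ivt_desc (P : ℕ → Prop) :
    ∀ b a, a < b → P a → ¬ P b → ∃ k, a ≤ k ∧ k < b ∧ P k ∧ ¬ P (k + 1) := by
  intro b
  induction b with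
  | zero => intro a h; omega
  | succ b ih =>
    intro a hab hPa hPb
    by_cases h : P b
    · exact ⟨b, by omega, by omega, h, hPb⟩
    · rcases eq_or_lt_of_le (Nat.lt_succ_iff.mp hab) with heq | hlt
      · exact absurd (heq ▸ hPa) h
      · obtain ⟨k, h1, h2, h3, h4⟩ := ih a hlt hPa h
        exact ⟨k, h1, by omega, h3, h4⟩

/-- A digraph admitting a directed path decomposition `X 0, ..., X (q-1)` of width
at most `d` has a `(2d+1)`-topological ordering. -/
theorem directed_pathwidth_bounds_zigzag {n : ℕ} (E : Set (Fin n × Fin n)) (d q : ℕ)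
    (X : Fin q → Finset (Fin n))
    (hcover : ∀ v : Fin n, ∃ j, v ∈ X j)
    (hconn : ∀ i j k : Fin q, i < j → j < k → X i ∩ X k ⊆ X j)
    (hedge : ∀ e ∈ E, ∃ i j : Fin q, i ≤ j ∧ e.1 ∈ X i ∧ e.2 ∈ X j)
    (hwidth : ∀ j : Fin q, (X j).card ≤ d) :
    ∃ ω : Fin n ≃ Fin n, IsZTopOrdering E ω (2 * d + 1) := by
  classical
  have hne : ∀ v : Fin n, (Finset.univ.filter (fun j => v ∈ X j)).Nonempty := by
    intro v; obtain ⟨j, hj⟩ := hcover v; exact ⟨j, by simp [hj]⟩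
  set g : Fin n → Fin q := fun v => (Finset.univ.filter (fun j => v ∈ X j)).min' (hne v)
    with hgdef
  have hgmem : ∀ v, v ∈ X (g v) := by
    intro v
    have := Finset.min'_mem _ (hne v)
    simpa [hgdef] using this
  have hgle : ∀ v j, v ∈ X j → g v ≤ j := by
    intro v j hj
    exact Finset.min'_le _ _ (by simp [hj])
  have hbetween : ∀ (v : Fin n) (b c : Fin q), v ∈ X b → g v ≤ c → c ≤ b → v ∈ X c := by
    intro v b c hb h1 h2
    rcases eq_or_lt_of_le h1 with e | h1
    · exact e ▸ hgmem v
    rcases eq_or_lt_of_le h2 with e | h2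
    · exact e ▸ hb
    exact hconn (g v) c b h1 h2 (Finset.mem_inter.mpr ⟨hgmem v, hb⟩)
  set σ := Tuple.sort g with hσ
  refine ⟨σ.symm, ?_⟩
  intro p m hp i
  obtain ⟨hdist, hedgep⟩ := hp
  set f : Fin n → ℕ := fun v => ((σ.symm v : Fin n) : ℕ) with hf
  have hmono : ∀ u v : Fin n, f u ≤ f v → g u ≤ g v := by
    intro u v h
    have h2 : σ.symm u ≤ σ.symm v := by
      rw [Fin.le_def]; exact h
    have := Tuple.monotone_sort g h2
    simpa [hσ] using this
  set s : Finset ℕ := (Finset.range m).filter (fun j => InCut f i (p j) (p (j + 1))) with hs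
  have hmem : ∀ j, j ∈ s ↔ j < m ∧ InCut f i (p j) (p (j + 1)) := by
    intro j; simp [hs]
  have hcard : Nat.card {j : ℕ // j < m ∧ InCut f i (p j) (p (j + 1))} = s.card := by
    rw [← Nat.card_eq_finsetCard]
    exact Nat.card_congr (Equiv.subtypeEquivRight (fun j => (hmem j).symm))
  show Nat.card {j : ℕ // j < m ∧ InCut f i (p j) (p (j + 1))} ≤ 2 * d + 1
  rw [hcard]
  rcases s.eq_empty_or_nonempty with he | ⟨j0, hj0⟩
  · simp [he]
  -- establish 0 < i and i < n from a crossing edge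
  have hj0' := (hmem j0).mp hj0
  have hin : i < n := by
    rcases hj0'.2 with ⟨_, h2⟩ | ⟨_, h2⟩
    · exact lt_of_le_of_lt h2 (Fin.is_lt _)
    · exact lt_of_le_of_lt h2 (Fin.is_lt _)
  set v0 : Fin n := σ ⟨i, hin⟩ with hv0
  have hfv0 : f v0 = i := by simp [hf, hv0]
  set t : Fin q := g v0 with ht
  have hS : ∀ u : Fin n, f u < i → g u ≤ t := fun u h => hmono u v0 (by omega)
  have hT : ∀ u : Fin n, i ≤ f u → t ≤ g u := fun u h => hmono v0 u (by omega)
  have hback : ∀ u u' : Fin n, (u, u') ∈ E → f u' < i → i ≤ f u → u' ∈ X t := by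
    intro u u' he h1 h2
    obtain ⟨a, b, hab, ha, hb⟩ := hedge (u, u') he
    have h3 : t ≤ a := le_trans (hT u h2) (hgle u a ha)
    exact hbetween u' b t hb (hS u' h1) (le_trans h3 hab)
  set B : Finset ℕ := s.filter (fun j => ¬ f (p j) < i) with hB
  set F : Finset ℕ := s.filter (fun j => f (p j) < i) with hF
  have hsplit : F.card + B.card = s.card :=
    Finset.card_filter_add_card_filter_not (s := s) (p := fun j => f (p j) < i)
  -- a member of B is a backward crossing
  have hBspec : ∀ j ∈ B, j < m ∧ f (p (j + 1)) < i ∧ i ≤ f (p j) := by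
    intro j hj
    rw [hB, Finset.mem_filter] at hj
    obtain ⟨hjs, hj2⟩ := hj
    obtain ⟨hjm, hcut⟩ := (hmem j).mp hjs
    rcases hcut with ⟨h1, _⟩ | ⟨h1, h2⟩
    · exact absurd h1 hj2
    · exact ⟨hjm, h1, h2⟩
  have hFspec : ∀ j ∈ F, j < m ∧ f (p j) < i ∧ i ≤ f (p (j + 1)) := by
    intro j hj
    rw [hF, Finset.mem_filter] at hj
    obtain ⟨hjs, hj2⟩ := hj
    obtain ⟨hjm, hcut⟩ := (hmem j).mp hjs
    rcases hcut with ⟨h1, h2⟩ | ⟨h1, h2⟩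
    · exact ⟨hjm, h1, h2⟩
    · omega
  -- |B| ≤ d via j ↦ p (j+1) ∈ X t
  have hBd : B.card ≤ d := by
    refine le_trans (Finset.card_le_card_of_injOn (fun j => p (j + 1)) ?_ ?_) (hwidth t)
    · intro j hj
      obtain ⟨hjm, h1, h2⟩ := hBspec j hj
      exact hback (p j) (p (j + 1)) (hedgep j hjm) h1 h2
    · intro j hj k hk hjk
      have hjm := (hBspec j (by simpa using hj)).1
      have hkm := (hBspec k (by simpa using hk)).1
      have := hdist (j + 1) (k + 1) (by omega) (by omega) hjk
      omega
  -- separation: between two forward crossings there is a backward crossing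
  have hsep : ∀ j j', j ∈ F → j' ∈ F → j < j' → ∃ k, k ∈ B ∧ j < k ∧ k < j' := by
    intro j j' hj hj' hlt
    obtain ⟨hjm, hj1, hj2⟩ := hFspec j hj
    obtain ⟨hjm', hj1', hj2'⟩ := hFspec j' hj'
    have hj1lt : j + 1 < j' := by
      rcases Nat.lt_or_ge (j + 1) j' with h | h
      · exact h
      · have heq : j' = j + 1 := by omega
        rw [heq] at hj1'
        omega
    obtain ⟨k, h1, h2, h3, h4⟩ := ivt_desc (fun k => i ≤ f (p k)) j' (j + 1) hj1lt hj2
      (not_le.mpr hj1')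
    have h3' : i ≤ f (p k) := h3
    have h4' : ¬ i ≤ f (p (k + 1)) := h4
    refine ⟨k, ?_, by omega, by omega⟩
    rw [hB, Finset.mem_filter]
    refine ⟨(hmem k).mpr ⟨by omega, Or.inr ⟨by omega, h3'⟩⟩, by omega⟩
  -- |F| ≤ |B| + 1
  have hFB : F.card ≤ B.card + 1 := by
    have hmB : m ∉ B := by
      intro hm
      exact absurd (hBspec m hm).1 (lt_irrefl m)
    have hBlt : ∀ k ∈ B, k < m := fun k hk => (hBspec k hk).1
    let φ : ℕ → ℕ := fun j => if h : ∃ k, k ∈ B ∧ j < k then Nat.find h else m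
    have hφdef : ∀ (j : ℕ) (h : ∃ k, k ∈ B ∧ j < k), φ j = Nat.find h :=
      fun j h => dif_pos h
    have hφndef : ∀ (j : ℕ), ¬ (∃ k, k ∈ B ∧ j < k) → φ j = m :=
      fun j h => dif_neg h
    have hφmem : ∀ j, φ j ∈ insert m B := by
      intro j
      by_cases h : ∃ k, k ∈ B ∧ j < k
      · rw [hφdef j h]; exact Finset.mem_insert_of_mem (Nat.find_spec h).1
      · rw [hφndef j h]; exact Finset.mem_insert_self _ _
    have hφlt : ∀ j j', j ∈ F → j' ∈ F → j < j' → φ j < φ j' := by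
      intro j j' hj hj' hlt
      obtain ⟨k, hkB, hk1, hk2⟩ := hsep j j' hj hj' hlt
      have hex : ∃ k, k ∈ B ∧ j < k := ⟨k, hkB, hk1⟩
      have h1 : φ j ≤ k := by
        rw [hφdef j hex]; exact Nat.find_le ⟨hkB, hk1⟩
      have h2 : φ j < m := lt_of_le_of_lt h1 (hBlt k hkB)
      by_cases h' : ∃ k, k ∈ B ∧ j' < k
      · rw [hφdef j' h']
        have h3 : j' < Nat.find h' := (Nat.find_spec h').2
        omega
      · rw [hφndef j' h']; exact h2
    calc F.card ≤ (insert m B).card := by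
          refine Finset.card_le_card_of_injOn φ (fun j _ => hφmem j) ?_
          intro j hj k hk hjk
          rcases lt_trichotomy j k with h | h | h
          · exact absurd hjk (Nat.ne_of_lt (hφlt j k (by simpa using hj) (by simpa using hk) h))
          · exact h
          · exact absurd hjk.symm
              (Nat.ne_of_lt (hφlt k j (by simpa using hk) (by simpa using hj) h))
      _ = B.card + 1 := Finset.card_insert_of_notMem hmB
  omega
end

section
/- For n ≥ 1, let D(n) be the digraph on vertex set {1, 2, ..., n} whose edges are the pairs (i, 2i) and (2i, i) for each i with 2i ≤ n, and the pairs (i, 2i+1) and (2i+1, i) for each i with 2i+1 ≤ n (the complete binary tree on n vertices with every tree edge replaced by two anti-parallel directed edges). Let ω be any linear ordering of {1, ..., n} in which every vertex precedes its children, i.e., ω(i) < ω(2i) whenever 2i ≤ n and ω(i) < ω(2i+1) whenever 2i+1 ≤ n. Then ω is a 2-topological ordering of D(n); in particular D(n) has zig-zag number at most 2. -/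
/-- The vertex set `{1, ..., n}` of the complete binary tree on `n` vertices. -/
def TreeVtx (n : ℕ) := {i : ℕ // 1 ≤ i ∧ i ≤ n}

/-- The edge set of `D(n)`: the complete binary tree on vertices `{1, ..., n}`
(with children `2i` and `2i+1` of `i`) in which every tree edge is replaced by
two anti-parallel directed edges. -/
def treeE (n : ℕ) : Set (TreeVtx n × TreeVtx n) :=
  {e | e.2.val = 2 * e.1.val ∨ e.2.val = 2 * e.1.val + 1 ∨
       e.1.val = 2 * e.2.val ∨ e.1.val = 2 * e.2.val + 1}

/-- `ω` is a `z`-topological ordering of the digraph on `TreeVtx n` with edge set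
`E`; `ω v` is the (0-indexed) position of the vertex `v`. -/
def IsZTopOrderingT {n : ℕ} (E : Set (TreeVtx n × TreeVtx n)) (ω : TreeVtx n ≃ Fin n)
    (z : ℕ) : Prop :=
  ∀ (p : ℕ → TreeVtx n) (m : ℕ), IsDiPath E p m →
    ∀ i : ℕ,
      Nat.card {j : ℕ // j < m ∧ InCut (fun v => (ω v : ℕ)) i (p j) (p (j + 1))} ≤ z

/-- A unimodal (strictly decreasing then strictly increasing) sequence crosses
any cut at most twice. -/
lemma unimodal_cut_count (g : ℕ → ℕ) (m t i : ℕ) (ht : t ≤ m)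
    (hdec : ∀ j, j < t → g (j + 1) < g j)
    (hinc : ∀ j, t ≤ j → j < m → g j < g (j + 1)) :
    Nat.card {j : ℕ //
      j < m ∧ ((g j < i ∧ i ≤ g (j + 1)) ∨ (g (j + 1) < i ∧ i ≤ g j))} ≤ 2 := by
  have hanti : ∀ a b, a ≤ b → b ≤ t → g b ≤ g a := by
    intro a b hab hbt
    induction b, hab using Nat.le_induction with
    | base => exact le_refl _
    | succ b hb ih =>
        have h1 := hdec b (by omega)
        have h2 := ih (by omega)
        omega
  have hmono : ∀ a b, t ≤ a → a ≤ b → b ≤ m → g a ≤ g b := by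
    intro a b hta hab hbm
    induction b, hab using Nat.le_induction with
    | base => exact le_refl _
    | succ b hb ih =>
        have h1 := hinc b (by omega) (by omega)
        have h2 := ih (by omega)
        omega
  have H : ∀ j k : ℕ, j < k → k < m →
      ((g j < i ∧ i ≤ g (j + 1)) ∨ (g (j + 1) < i ∧ i ≤ g j)) →
      ((g k < i ∧ i ≤ g (k + 1)) ∨ (g (k + 1) < i ∧ i ≤ g k)) →
      (j < t ↔ k < t) → False := by
    intro j k hjk hkm hcj hck hiff
    by_cases hjt : j < t
    · have hkt : k < t := hiff.mp hjt
      have d1 := hdec j hjt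
      have d2 := hdec k hkt
      have a1 := hanti (j + 1) k (by omega) (by omega)
      omega
    · have hkt : ¬ k < t := fun h => hjt (hiff.mpr h)
      have i1 := hinc j (by omega) (by omega)
      have i2 := hinc k (by omega) hkm
      have a1 := hmono (j + 1) k (by omega) (by omega) (by omega)
      omega
  classical
  have hinj : Function.Injective
      (fun j : {j : ℕ //
        j < m ∧ ((g j < i ∧ i ≤ g (j + 1)) ∨ (g (j + 1) < i ∧ i ≤ g j))} =>
        decide (j.val < t)) := by
    intro a b hab
    have hiff : (a.val < t ↔ b.val < t) := by
      simpa [decide_eq_decide] using hab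
    rcases Nat.lt_trichotomy a.val b.val with h | h | h
    · exact absurd hiff (fun hh => H a.val b.val h b.2.1 a.2.2 b.2.2 hh)
    · exact Subtype.ext h
    · exact absurd hiff.symm (fun hh => H b.val a.val h a.2.1 b.2.2 a.2.2 hh)
  calc Nat.card _ ≤ Nat.card Bool := Nat.card_le_card_of_injective _ hinj
    _ = 2 := by simp [Nat.card_eq_fintype_card]

/-- Any linear ordering of the symmetrically oriented complete binary tree `D(n)`
in which every vertex precedes its children is a `2`-topological ordering; in
particular `D(n)` has zig-zag number at most `2`. -/
theorem doubled_binary_tree_zigzag_le_two (n : ℕ) (hn : 1 ≤ n)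
    (ω : TreeVtx n ≃ Fin n)
    (hparent : ∀ u v : TreeVtx n,
      (v.val = 2 * u.val ∨ v.val = 2 * u.val + 1) → (ω u : ℕ) < (ω v : ℕ)) :
    IsZTopOrderingT (treeE n) ω 2 ∧
      ∃ ω' : TreeVtx n ≃ Fin n, IsZTopOrderingT (treeE n) ω' 2 := by
  classical
  have main : IsZTopOrderingT (treeE n) ω 2 := by
    intro p m hp i
    set g : ℕ → ℕ := fun j => (ω (p j) : ℕ) with hg
    -- Up j : p (j+1) is the parent of p j ; Down j : p (j+1) is a child of p j
    have hud : ∀ j, j < m →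
        ((p j).val = 2 * (p (j + 1)).val ∨ (p j).val = 2 * (p (j + 1)).val + 1) ∨
        ((p (j + 1)).val = 2 * (p j).val ∨ (p (j + 1)).val = 2 * (p j).val + 1) := by
      intro j hj
      have := hp.2 j hj
      simp only [treeE, Set.mem_setOf_eq] at this
      tauto
    have hstep : ∀ j, j + 1 < m →
        ((p (j + 1)).val = 2 * (p j).val ∨ (p (j + 1)).val = 2 * (p j).val + 1) →
        ((p (j + 2)).val = 2 * (p (j + 1)).val ∨
          (p (j + 2)).val = 2 * (p (j + 1)).val + 1) := by
      intro j hj hdown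
      rcases hud (j + 1) hj with hu | hd
      · exfalso
        have heq : (p j).val = (p (j + 1 + 1)).val := by omega
        have : p j = p (j + 2) := Subtype.ext heq
        have := hp.1 j (j + 2) (by omega) (by omega) this
        omega
      · exact hd
    by_cases hex : ∃ j, j < m ∧
        ((p (j + 1)).val = 2 * (p j).val ∨ (p (j + 1)).val = 2 * (p j).val + 1)
    · set t := Nat.find hex with htdef
      obtain ⟨htm, htd⟩ := Nat.find_spec hex
      have hall : ∀ j, t ≤ j → j < m →
          ((p (j + 1)).val = 2 * (p j).val ∨ (p (j + 1)).val = 2 * (p j).val + 1) := by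
        intro j htj
        induction j, htj using Nat.le_induction with
        | base => intro _; exact htd
        | succ j hj ih =>
            intro h
            exact hstep j h (ih (by omega))
      have hdec : ∀ j, j < t → g (j + 1) < g j := by
        intro j hj
        have hjm : j < m := by omega
        have hmin := Nat.find_min hex hj
        rcases hud j hjm with hu | hd
        · exact hparent (p (j + 1)) (p j) hu
        · exact absurd ⟨hjm, hd⟩ hmin
      have hinc : ∀ j, t ≤ j → j < m → g j < g (j + 1) := by
        intro j htj hjm
        exact hparent (p j) (p (j + 1)) (hall j htj hjm)
      exact unimodal_cut_count g m t i (le_of_lt htm) hdec hinc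
    · push_neg at hex
      have hdec : ∀ j, j < m → g (j + 1) < g j := by
        intro j hj
        rcases hud j hj with hu | hd
        · exact hparent (p (j + 1)) (p j) hu
        · rcases hd with h | h
          exacts [absurd h (hex j hj).1, absurd h (hex j hj).2]
      exact unimodal_cut_count g m m i (le_refl m) hdec (fun j h1 h2 => by omega)
  exact ⟨main, ω, main⟩
end

section
/- For every natural number d there exists a digraph G = (V, E) that admits a 2-topological ordering but admits no directed path decomposition of width at most d; that is, graphs of zig-zag number at most 2 have unbounded directed path-width. -/
/-!
Take the symmetric orientation of the complete binary tree of height `2d + 1`, with vertices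
numbered in heap order (the children of `x` are `2x` and `2x + 1`). A directed simple path in it
is a simple path of the tree: it climbs towards the root and then descends, so its sequence of
heap indices decreases and then increases, and any cut of the heap ordering meets it at most twice.

A directed path decomposition of a symmetric digraph assigns to each vertex an interval of bags,
and the intervals of adjacent vertices overlap. For three disjoint subtrees, each with a bag
containing `k + 1` of its vertices, take the one whose heavy bag `t` comes in the middle; the rest
of the tree is connected and contains a vertex whose interval starts before `t` and one whose
interval ends after `t`, so it has a vertex in bag `t` as well. As every vertex has three
disjoint subtrees two levels below it, induction shows that the complete binary tree of height
`2k + 1` needs a bag of size `k + 1`.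
-/

open Set

def HeapAdj (x y : ℕ) : Prop := x / 2 = y ∨ y / 2 = x

/-- Vertex `v : Fin n` has heap index `v + 1`. -/
def heapDigraph (n : ℕ) : Set (Fin n × Fin n) := {e | HeapAdj ((e.1 : ℕ) + 1) ((e.2 : ℕ) + 1)}

theorem HeapAdj.symm {x y : ℕ} (h : HeapAdj x y) : HeapAdj y x := Or.symm h

theorem HeapAdj.eq_of_lt_of_lt {x y z : ℕ} (hxy : HeapAdj x y) (hyz : HeapAdj y z)
    (hx : x < y) (hz : z < y) : x = z := by
  unfold HeapAdj at hxy hyz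
  omega

theorem card_inCut_le_two_of_valley {g : ℕ → ℕ} {m T : ℕ}
    (hdown : ∀ j < T, g (j + 1) < g j) (hup : ∀ j, T ≤ j → j < m → g j < g (j + 1)) (i : ℕ) :
    Nat.card {j : ℕ // j < m ∧ InCut g i j (j + 1)} ≤ 2 := by
  have hanti : StrictAntiOn g (Iic T) := strictAntiOn_Iic_of_succ_lt hdown
  have hmono : StrictMonoOn g (Icc T m) :=
    strictMonoOn_of_lt_add_one ordConnected_Icc fun j _ hj hj1 => hup j hj.1 (by grind)
  have hside : ∀ j k, j < k → k < m → InCut g i j (j + 1) → InCut g i k (k + 1) →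
      (j < T ↔ k < T) → False := by
    intro j k hjk hkm hj hk hjkT
    unfold InCut at hj hk
    by_cases hjT : j < T
    · have := hanti.antitoneOn (by grind) (by grind) (by omega : j + 1 ≤ k)
      have := hdown j hjT
      have := hdown k (hjkT.1 hjT)
      omega
    · have := hmono.monotoneOn (by grind) (by grind) (by omega : j + 1 ≤ k)
      have := hup j (by omega) (by omega)
      have := hup k (by grind) hkm
      omega
  calc Nat.card {j : ℕ // j < m ∧ InCut g i j (j + 1)} ≤ Nat.card Bool := by
        refine Nat.card_le_card_of_injective (fun j => decide (j.1 < T)) ?_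
        rintro ⟨j, hjm, hj⟩ ⟨k, hkm, hk⟩ hjk
        simp only [decide_eq_decide] at hjk
        rcases lt_trichotomy j k with h | h | h
        · exact (hside j k h hkm hj hk hjk).elim
        · exact Subtype.ext h
        · exact (hside k j h hjm hk hj hjk.symm).elim
    _ = 2 := by simp

theorem exists_valley {f : ℕ → ℕ} {m : ℕ} (hne : ∀ j < m, f j ≠ f (j + 1))
    (hpeak : ∀ j, j + 1 < m → f j < f (j + 1) → f (j + 1) < f (j + 2)) :
    ∃ T, (∀ j < T, f (j + 1) < f j) ∧ ∀ j, T ≤ j → j < m → f j < f (j + 1) := by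
  classical
  have hex : ∃ T, m ≤ T ∨ f T < f (T + 1) := ⟨m, Or.inl le_rfl⟩
  refine ⟨Nat.find hex, fun j hj => ?_, fun j hTj hjm => ?_⟩
  · have := Nat.find_min hex hj
    simp only [not_or, not_le, not_lt] at this
    exact this.2.lt_of_ne (hne j this.1).symm
  · induction j, hTj using Nat.le_induction with
    | base => exact (Nat.find_spec hex).resolve_left (by omega)
    | succ j hTj ih => exact hpeak j hjm (ih (by omega))

theorem isZTopOrdering_heapDigraph (n : ℕ) : IsZTopOrdering (heapDigraph n) (Equiv.refl _) 2 := by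
  rintro p m ⟨hinj, hadj⟩ i
  have hne : ∀ j < m, (p j : ℕ) ≠ p (j + 1) := fun j hj h =>
    absurd (hinj j (j + 1) (by omega) (by omega) (Fin.ext h)) (by omega)
  have hpeak : ∀ j, j + 1 < m → (p j : ℕ) < p (j + 1) → (p (j + 1) : ℕ) < p (j + 2) := by
    intro j hj hlt
    by_contra! hge
    have h1 : HeapAdj ((p j : ℕ) + 1) ((p (j + 1) : ℕ) + 1) := hadj j (by omega)
    have h2 : HeapAdj ((p (j + 1) : ℕ) + 1) ((p (j + 2) : ℕ) + 1) := hadj (j + 1) hj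
    have h3 : (p (j + 1) : ℕ) ≠ p (j + 2) := hne (j + 1) hj
    have := h1.eq_of_lt_of_lt h2 (by omega) (by omega)
    exact absurd (hinj j (j + 2) (by omega) (by omega) (Fin.ext (by omega))) (by omega)
  obtain ⟨T, hdown, hup⟩ := exists_valley hne hpeak
  -- `InCut (fun v => (v : ℕ)) i (p j) (p (j + 1))` is `InCut (fun j => (p j : ℕ)) i j (j + 1)`
  exact card_inCut_le_two_of_valley hdown hup i

theorem exists_median {α : Type*} [LinearOrder α] (t : Fin 3 → α) :
    ∃ i j m : Fin 3, i ≠ m ∧ j ≠ m ∧ t i ≤ t m ∧ t m ≤ t j := by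
  rcases le_total (t 0) (t 1) with h01 | h10 <;> rcases le_total (t 1) (t 2) with h12 | h21 <;>
    rcases le_total (t 0) (t 2) with h02 | h20
  all_goals first
    | exact ⟨0, 2, 1, by decide, by decide, ‹_›, ‹_›⟩
    | exact ⟨2, 0, 1, by decide, by decide, ‹_›, ‹_›⟩
    | exact ⟨1, 2, 0, by decide, by decide, ‹_›, ‹_›⟩
    | exact ⟨2, 1, 0, by decide, by decide, ‹_›, ‹_›⟩
    | exact ⟨0, 1, 2, by decide, by decide, ‹_›, ‹_›⟩
    | exact ⟨1, 0, 2, by decide, by decide, ‹_›, ‹_›⟩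

namespace HeapTree

def IsDesc (u v : ℕ) : Prop := ∃ j, v / 2 ^ j = u

theorem IsDesc.refl (u : ℕ) : IsDesc u u := ⟨0, by simp⟩

theorem IsDesc.trans {u v w : ℕ} (huv : IsDesc u v) (hvw : IsDesc v w) : IsDesc u w := by
  obtain ⟨i, rfl⟩ := huv
  obtain ⟨j, rfl⟩ := hvw
  exact ⟨j + i, by rw [pow_add, Nat.div_div_eq_div_mul]⟩

theorem IsDesc.le {u v : ℕ} (h : IsDesc u v) : u ≤ v := by
  obtain ⟨j, rfl⟩ := h
  exact Nat.div_le_self v _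

theorem IsDesc.of_div_two {u v : ℕ} (h : IsDesc u (v / 2)) : IsDesc u v := by
  obtain ⟨j, rfl⟩ := h
  exact ⟨j + 1, by rw [pow_succ', Nat.div_div_eq_div_mul]⟩

theorem IsDesc.div_two {u v : ℕ} (h : IsDesc u v) (hne : v ≠ u) : IsDesc u (v / 2) := by
  obtain ⟨_ | j, rfl⟩ := h
  · simp at hne
  · exact ⟨j, by rw [pow_succ', Nat.div_div_eq_div_mul]⟩

theorem IsDesc.two_mul_le {u v : ℕ} (h : IsDesc u v) (hne : v ≠ u) : 2 * u ≤ v := by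
  have := (h.div_two hne).le
  omega

theorem IsDesc.total {p q v : ℕ} (hp : IsDesc p v) (hq : IsDesc q v) : IsDesc p q ∨ IsDesc q p := by
  obtain ⟨i, rfl⟩ := hp
  obtain ⟨j, rfl⟩ := hq
  rcases le_total i j with h | h
  · exact .inr ⟨j - i, by rw [Nat.div_div_eq_div_mul, ← pow_add, Nat.add_sub_cancel' h]⟩
  · exact .inl ⟨i - j, by rw [Nat.div_div_eq_div_mul, ← pow_add, Nat.add_sub_cancel' h]⟩

theorem eq_of_isDesc_of_isDesc {p q v : ℕ} (hp : IsDesc p v) (hq : IsDesc q v)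
    (hpq : p < 2 * q) (hqp : q < 2 * p) : p = q := by
  by_contra hne
  rcases hp.total hq with h | h
  · have := h.two_mul_le (Ne.symm hne)
    omega
  · have := h.two_mul_le hne
    omega

def subtree (n u : ℕ) : Set ℕ := {v | IsDesc u v ∧ v ≤ n}

theorem subtree_finite (n u : ℕ) : (subtree n u).Finite :=
  (finite_Iic n).subset fun _ hv => hv.2

theorem subtree_subset {n u w : ℕ} (hw : w ∈ subtree n u) : subtree n w ⊆ subtree n u :=
  fun _ hv => ⟨hw.1.trans hv.1, hv.2⟩

theorem notMem_subtree_four_mul_add {n u x i m : ℕ} (hu : 1 ≤ u) (hi : i < 4) (hm : m < 4)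
    (him : i ≠ m) (hx : x ∈ subtree n (4 * u + i)) : x ∉ subtree n (4 * u + m) := fun hx' => by
  have := eq_of_isDesc_of_isDesc hx.1 hx'.1 (by omega) (by omega)
  omega

section Intervals

variable {β : Type*} [LinearOrder β] (a b : ℕ → β)

def active (S : Set ℕ) (t : β) : Set ℕ := {v ∈ S | a v ≤ t ∧ t ≤ b v}

/-- Holds for `x, y ∈ S` whenever `S` is connected through overlapping intervals `[a w, b w]`. -/
def SameSide (S : Set ℕ) (x y : ℕ) : Prop :=
  ∀ t, (∀ w ∈ S, t < a w ∨ b w < t) → (b x < t ↔ b y < t)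

def OverlapsParent (n : ℕ) : Prop := ∀ v, 2 ≤ v → v ≤ n → a (v / 2) ≤ b v ∧ a v ≤ b (v / 2)

variable {a b}

theorem SameSide.refl (S : Set ℕ) (x : ℕ) : SameSide a b S x x := fun _ _ => Iff.rfl

theorem SameSide.symm {S : Set ℕ} {x y : ℕ} (h : SameSide a b S x y) : SameSide a b S y x :=
  fun t ht => (h t ht).symm

theorem SameSide.trans {S : Set ℕ} {x y z : ℕ} (hxy : SameSide a b S x y)
    (hyz : SameSide a b S y z) : SameSide a b S x z :=
  fun t ht => (hxy t ht).trans (hyz t ht)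

theorem sameSide_of_overlap {S : Set ℕ} {x y : ℕ} (hx : x ∈ S) (hy : y ∈ S)
    (hxy : a x ≤ b y) (hyx : a y ≤ b x) : SameSide a b S x y := by
  intro t ht
  constructor
  · intro hxt
    exact (ht y hy).resolve_left (hyx.trans_lt hxt).not_gt
  · intro hyt
    exact (ht x hx).resolve_left (hxy.trans_lt hyt).not_gt

theorem SameSide.active_nonempty {S : Set ℕ} {x y : ℕ} {t : β} (hxy : SameSide a b S x y)
    (hx : x ∈ S) (hxt : a x ≤ t) (hty : t ≤ b y) : (active a b S t).Nonempty := by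
  by_contra hempty
  have hmiss : ∀ w ∈ S, t < a w ∨ b w < t := by
    intro w hw
    by_contra! h
    exact hempty ⟨w, hw, h⟩
  have hxt' : b x < t := (hmiss x hx).resolve_left hxt.not_gt
  exact hty.not_gt ((hxy t hmiss).mp hxt')

variable {n : ℕ}

theorem sameSide_root {u : ℕ} {S : Set ℕ} (hov : OverlapsParent a b n)
    (hu : 1 ≤ u) (hS : S ⊆ subtree n u) (hpar : ∀ v ∈ S, v ≠ u → v / 2 ∈ S) :
    ∀ v ∈ S, SameSide a b S v u := by
  intro v
  induction v using Nat.strong_induction_on with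
  | _ v ih =>
    intro hv
    by_cases hvu : v = u
    · exact hvu ▸ SameSide.refl S v
    · have hle := (hS hv).1.two_mul_le hvu
      have hedge := hov v (by omega) (hS hv).2
      exact (sameSide_of_overlap hv (hpar v hv hvu) hedge.2 hedge.1).trans
        (ih (v / 2) (by omega) (hpar v hv hvu))

theorem sameSide_compl_subtree {u w : ℕ} (hov : OverlapsParent a b n) (hu : 1 ≤ u) :
    ∀ v ∈ subtree n u \ subtree n w, SameSide a b (subtree n u \ subtree n w) v u := by
  refine sameSide_root hov hu sdiff_subset ?_
  rintro v ⟨hv, hvw⟩ hvu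
  exact ⟨⟨hv.1.div_two hvu, (Nat.div_le_self v 2).trans hv.2⟩,
    fun h => hvw ⟨h.1.of_div_two, hv.2⟩⟩

theorem ncard_active_lt {u w x y : ℕ} {t : β} (hov : OverlapsParent a b n)
    (hu : 1 ≤ u) (hw : w ∈ subtree n u)
    (hx : x ∈ subtree n u \ subtree n w) (hy : y ∈ subtree n u \ subtree n w)
    (hxt : a x ≤ t) (hty : t ≤ b y) :
    (active a b (subtree n w) t).ncard < (active a b (subtree n u) t).ncard := by
  have hxy := (sameSide_compl_subtree hov hu x hx).trans
    (sameSide_compl_subtree hov hu y hy).symm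
  obtain ⟨z, ⟨hzu, hzw⟩, hzt⟩ := hxy.active_nonempty hx hxt hty
  refine ncard_lt_ncard ?_ ((subtree_finite n u).subset fun _ hv => hv.1)
  have hsub : active a b (subtree n w) t ⊆ active a b (subtree n u) t :=
    fun v hv => ⟨subtree_subset hw hv.1, hv.2⟩
  exact (ssubset_iff_of_subset hsub).2 ⟨z, ⟨hzu, hzt⟩, fun h => hzw h.1⟩

theorem exists_ncard_active_ge (hab : ∀ v, 1 ≤ v → v ≤ n → a v ≤ b v)
    (hov : OverlapsParent a b n) {k u : ℕ} (hu : 1 ≤ u) (hn : (u + 1) * 4 ^ k ≤ n + 1) :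
    ∃ t, k + 1 ≤ (active a b (subtree n u) t).ncard := by
  induction k generalizing u with
  | zero =>
    have hun : u ≤ n := by simpa using hn
    have hu_active : u ∈ active a b (subtree n u) (a u) := ⟨⟨.refl u, hun⟩, le_rfl, hab u hu hun⟩
    exact ⟨a u, (ncard_pos ((subtree_finite n u).subset fun _ hv => hv.1)).2 ⟨u, hu_active⟩⟩
  | succ k ih =>
    have hbound (i : Fin 3) : (4 * u + i + 1) * 4 ^ k ≤ n + 1 :=
      calc (4 * u + i + 1) * 4 ^ k ≤ 4 * (u + 1) * 4 ^ k := by gcongr; omega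
        _ = (u + 1) * 4 ^ (k + 1) := by ring
        _ ≤ n + 1 := hn
    have hmem (i : Fin 3) : 4 * u + i ∈ subtree n u :=
      ⟨⟨2, by omega⟩, by nlinarith [hbound i, Nat.one_le_pow k 4 (by norm_num)]⟩
    have hdisj {i m : Fin 3} (him : i ≠ m) {x : ℕ} (hx : x ∈ subtree n (4 * u + i)) :
        x ∈ subtree n u \ subtree n (4 * u + m) :=
      ⟨subtree_subset (hmem i) hx, notMem_subtree_four_mul_add hu (by omega) (by omega)
        (Fin.val_injective.ne him) hx⟩
    choose t ht using fun i : Fin 3 => ih (by omega) (hbound i)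
    obtain ⟨i, j, m, him, hjm, htim, htmj⟩ := exists_median t
    obtain ⟨x, hx, hxt, -⟩ := nonempty_of_ncard_ne_zero ((k.succ_pos.trans_le (ht i)).ne')
    obtain ⟨y, hy, -, hyt⟩ := nonempty_of_ncard_ne_zero ((k.succ_pos.trans_le (ht j)).ne')
    exact ⟨t m, (ht m).trans_lt (ncard_active_lt hov hu (hmem m) (hdisj him hx) (hdisj hjm hy)
      (hxt.trans htim) (htmj.trans hyt))⟩

end Intervals

end HeapTree

theorem exists_bag_interval {α : Type*} [DecidableEq α] {q : ℕ} (X : Fin q → Finset α)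
    (hcov : ∀ v, ∃ j, v ∈ X j) (hconv : ∀ i j k : Fin q, i < j → j < k → X i ∩ X k ⊆ X j) :
    ∃ a b : α → Fin q, ∀ v j, v ∈ X j ↔ a v ≤ j ∧ j ≤ b v := by
  let bags (v : α) : Finset (Fin q) := Finset.univ.filter (v ∈ X ·)
  have hbags (v : α) : (bags v).Nonempty := by
    obtain ⟨j, hj⟩ := hcov v
    exact ⟨j, by simpa [bags] using hj⟩
  refine ⟨fun v => (bags v).min' (hbags v), fun v => (bags v).max' (hbags v), fun v j => ?_⟩
  have hmin : v ∈ X ((bags v).min' (hbags v)) := by simpa [bags] using (bags v).min'_mem (hbags v)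
  have hmax : v ∈ X ((bags v).max' (hbags v)) := by simpa [bags] using (bags v).max'_mem (hbags v)
  refine ⟨fun hj => ⟨(bags v).min'_le j (by simpa [bags]), (bags v).le_max' j (by simpa [bags])⟩,
    fun ⟨hlo, hhi⟩ => ?_⟩
  rcases hlo.lt_or_eq with hlo | rfl
  · rcases hhi.lt_or_eq with hhi | rfl
    · exact hconv _ _ _ hlo hhi (Finset.mem_inter.2 ⟨hmin, hmax⟩)
    · exact hmax
  · exact hmin

theorem exists_card_bag_gt_of_heapDigraph {n q k : ℕ} (hn : 2 * 4 ^ k ≤ n + 1)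
    (X : Fin q → Finset (Fin n)) (hcov : ∀ v, ∃ j, v ∈ X j)
    (hconv : ∀ i j k : Fin q, i < j → j < k → X i ∩ X k ⊆ X j)
    (hedge : ∀ e ∈ heapDigraph n, ∃ i j : Fin q, i ≤ j ∧ e.1 ∈ X i ∧ e.2 ∈ X j) :
    ∃ j, k < (X j).card := by
  obtain ⟨a, b, hX⟩ := exists_bag_interval X hcov hconv
  have hab (v : Fin n) : a v ≤ b v := by
    obtain ⟨j, hj⟩ := hcov v
    exact ((hX v j).1 hj).1.trans ((hX v j).1 hj).2
  have hedge' (x y : Fin n) (hxy : HeapAdj ((x : ℕ) + 1) ((y : ℕ) + 1)) : a x ≤ b y := by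
    obtain ⟨i, j, hij, hi, hj⟩ := hedge (x, y) hxy
    exact ((hX x i).1 hi).1.trans (hij.trans ((hX y j).1 hj).2)
  have : NeZero n := ⟨by have := Nat.one_le_pow k 4 (by norm_num); omega⟩
  let vertex (v : ℕ) : Fin n := Fin.ofNat n (v - 1)
  have hvertex (v : ℕ) (h1 : 1 ≤ v) (hv : v ≤ n) : (vertex v : ℕ) + 1 = v := by
    rw [Fin.val_ofNat, Nat.mod_eq_of_lt (by omega)]
    omega
  have hov : HeapTree.OverlapsParent (fun v => a (vertex v)) (fun v => b (vertex v)) n := by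
    intro v h2 hv
    have hadj : HeapAdj ((vertex v : ℕ) + 1) ((vertex (v / 2) : ℕ) + 1) := by
      rw [hvertex v (by omega) hv, hvertex (v / 2) (by omega) (by omega)]
      exact .inl rfl
    exact ⟨hedge' _ _ hadj.symm, hedge' _ _ hadj⟩
  obtain ⟨t, ht⟩ := HeapTree.exists_ncard_active_ge (fun v _ _ => hab (vertex v)) hov
    le_rfl hn
  have hinj : InjOn vertex (HeapTree.subtree n 1) := fun v hv w hw hvw => by
    have hv' := hvertex v hv.1.le hv.2
    rw [hvw, hvertex w hw.1.le hw.2] at hv'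
    exact hv'.symm
  refine ⟨t, ht.trans ?_⟩
  calc _ ≤ (X t : Set (Fin n)).ncard :=
        ncard_le_ncard_of_injOn vertex (fun v hv => (hX _ _).2 hv.2) (hinj.mono fun _ hv => hv.1)
    _ = (X t).card := ncard_coe_finset _

/-- Digraphs of zig-zag number at most `2` have unbounded directed path-width:
for every `d` there is a digraph admitting a `2`-topological ordering but no
directed path decomposition of width at most `d`. -/
theorem zigzag_two_unbounded_directed_pathwidth :
    ∀ d : ℕ, ∃ (n : ℕ) (E : Set (Fin n × Fin n)),
      (∃ ω : Fin n ≃ Fin n, IsZTopOrdering E ω 2) ∧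
      ¬ ∃ (q : ℕ) (X : Fin q → Finset (Fin n)),
          (∀ v : Fin n, ∃ j, v ∈ X j) ∧
          (∀ i j k : Fin q, i < j → j < k → X i ∩ X k ⊆ X j) ∧
          (∀ e ∈ E, ∃ i j : Fin q, i ≤ j ∧ e.1 ∈ X i ∧ e.2 ∈ X j) ∧
          (∀ j : Fin q, (X j).card ≤ d) := by
  intro d
  refine ⟨2 * 4 ^ d - 1, heapDigraph _, ⟨Equiv.refl _, isZTopOrdering_heapDigraph _⟩, ?_⟩
  rintro ⟨q, X, hcov, hconv, hedge, hwidth⟩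
  have hn : 2 * 4 ^ d ≤ 2 * 4 ^ d - 1 + 1 := by
    have := Nat.one_le_pow d 4 (by norm_num)
    omega
  obtain ⟨j, hj⟩ := exists_card_bag_gt_of_heapDigraph hn X hcov hconv hedge
  exact (hwidth j).not_gt hj
end
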